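/- arXiv:2502.01578 — 2 statements merged into one kernel-verified Lean document; each statement's English description precedes it below -/
import Mathlib

section
/- Let d be a positive integer and let x_1,…,x_d, y_1,…,y_d be mutually independent real random variables, each distributed as the standard Gaussian N(0,1). Then the variance of z = ∑_{i=1}^d exp(x_i) · exp(y_i) equals e²(e²−1)·d. -/
open MeasureTheory ProbabilityTheory Real
open scoped ENNReal NNReal

lemma my_variance_congr {Ω : Type*} {m : MeasurableSpace Ω} {μ : Measure Ω} {X Y : Ω → ℝ}
    (h : X =ᵐ[μ] Y) : variance X μ = variance Y μ := by
  unfold ProbabilityTheory.variance ProbabilityTheory.evariance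
  rw [integral_congr_ae h]
  congr 1
  apply lintegral_congr_ae
  filter_upwards [h] with ω hω
  rw [hω]

lemma my_iIndepFun_congr {Ω ι : Type*} {m : MeasurableSpace Ω} {μ : Measure Ω}
    [IsProbabilityMeasure μ] {f g : ι → Ω → ℝ}
    (h : iIndepFun f μ) (hae : ∀ i, f i =ᵐ[μ] g i) :
    iIndepFun g μ := by
  rw [iIndepFun_iff_measure_inter_preimage_eq_mul] at h ⊢
  intro S sets H
  have h1 := h S H
  have hpre : ∀ i, (f i ⁻¹' sets i : Set Ω) =ᵐ[μ] (g i ⁻¹' sets i) := fun i => by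
    filter_upwards [hae i] with ω hω
    exact congrArg (· ∈ sets i) hω
  have hint : (⋂ i ∈ S, f i ⁻¹' sets i : Set Ω) =ᵐ[μ] (⋂ i ∈ S, g i ⁻¹' sets i) := by
    have hall : ∀ᵐ ω ∂μ, ∀ i ∈ S, f i ω = g i ω :=
      (ae_ball_iff S.countable_toSet).2 fun i _ => hae i
    filter_upwards [hall] with ω hω
    show (ω ∈ ⋂ i ∈ S, f i ⁻¹' sets i) = (ω ∈ ⋂ i ∈ S, g i ⁻¹' sets i)
    simp only [Set.mem_iInter, Set.mem_preimage, eq_iff_iff]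
    constructor
    · intro hmem i hi; rw [← hω i hi]; exact hmem i hi
    · intro hmem i hi; rw [hω i hi]; exact hmem i hi
  rw [← measure_congr hint, h1]
  exact Finset.prod_congr rfl fun i _ => measure_congr (hpre i)
open scoped ENNReal NNReal

section moments
variable {Ω : Type*} {m : MeasurableSpace Ω} {μ : Measure Ω} {W : Ω → ℝ}

lemma gauss_pdf_mul_exp (t x : ℝ) :
    gaussianPDFReal 0 1 x * rexp (t * x) = rexp (t ^ 2 / 2) * gaussianPDFReal t 1 x := by
  simp only [gaussianPDFReal, NNReal.coe_one, mul_one]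
  rw [mul_assoc, mul_comm (rexp (t^2/2)), mul_assoc, ← Real.exp_add, ← Real.exp_add]
  congr 1
  ring_nf

lemma key_integrable (t : ℝ) :
    Integrable (fun x => rexp (t * x)) (gaussianReal 0 1) := by
  rw [gaussianReal_of_var_ne_zero _ one_ne_zero]
  have hm : Measurable (fun x => (gaussianPDFReal 0 1 x).toNNReal) :=
    (measurable_gaussianPDFReal 0 1).real_toNNReal
  rw [show (gaussianPDF 0 1) = fun x => ((gaussianPDFReal 0 1 x).toNNReal : ℝ≥0∞) from rfl,
    integrable_withDensity_iff_integrable_smul hm]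
  have : (fun x => (gaussianPDFReal 0 1 x).toNNReal • rexp (t * x))
      = fun x => rexp (t ^ 2 / 2) * gaussianPDFReal t 1 x := by
    ext x
    rw [NNReal.smul_def, smul_eq_mul, Real.coe_toNNReal _ (gaussianPDFReal_nonneg 0 1 x),
      gauss_pdf_mul_exp]
  rw [this]
  exact (integrable_gaussianPDFReal t 1).const_mul _

lemma key_integral (t : ℝ) :
    ∫ x, rexp (t * x) ∂(gaussianReal 0 1) = rexp (t ^ 2 / 2) := by
  rw [gaussianReal_of_var_ne_zero _ one_ne_zero]
  have hm : Measurable (fun x => (gaussianPDFReal 0 1 x).toNNReal) :=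
    (measurable_gaussianPDFReal 0 1).real_toNNReal
  rw [show (gaussianPDF 0 1) = fun x => ((gaussianPDFReal 0 1 x).toNNReal : ℝ≥0∞) from rfl,
    integral_withDensity_eq_integral_smul hm]
  have : (fun x => (gaussianPDFReal 0 1 x).toNNReal • rexp (t * x))
      = fun x => rexp (t ^ 2 / 2) * gaussianPDFReal t 1 x := by
    ext x
    rw [NNReal.smul_def, smul_eq_mul, Real.coe_toNNReal _ (gaussianPDFReal_nonneg 0 1 x),
      gauss_pdf_mul_exp]
  rw [this, integral_const_mul, integral_gaussianPDFReal_eq_one t one_ne_zero, mul_one]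

lemma exp_comp_integrable (hW : AEMeasurable W μ) (hmap : Measure.map W μ = gaussianReal 0 1)
    (t : ℝ) : Integrable (fun ω => rexp (t * W ω)) μ := by
  have h := key_integrable t
  rw [← hmap] at h
  exact (integrable_map_measure ((measurable_id.const_mul t).exp.aestronglyMeasurable) hW).mp h

lemma exp_comp_integral (hW : AEMeasurable W μ) (hmap : Measure.map W μ = gaussianReal 0 1)
    (t : ℝ) : ∫ ω, rexp (t * W ω) ∂μ = rexp (t ^ 2 / 2) := by
  rw [← key_integral t, ← hmap]
  exact (integral_map hW ((measurable_id.const_mul t).exp.aestronglyMeasurable)).symm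

end moments

/-- Theorem 3.1 (second half): for `2d` mutually independent standard Gaussian random
variables `x₁,…,x_d, y₁,…,y_d`, the variance of `z = ∑ i, exp(xᵢ) * exp(yᵢ)` equals
`e²(e² − 1)·d`. -/
theorem variance_sum_exp_mul_of_iid_gaussian
    {Ω : Type*} [MeasureSpace Ω] [IsProbabilityMeasure (ℙ : Measure Ω)]
    (d : ℕ) (hd : 0 < d) (X Y : Fin d → Ω → ℝ)
    (hindep : iIndepFun (Sum.elim X Y) ℙ)
    (hX : ∀ i, Measure.map (X i) ℙ = gaussianReal 0 1)
    (hY : ∀ i, Measure.map (Y i) ℙ = gaussianReal 0 1) :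
    variance (fun ω => ∑ i, Real.exp (X i ω) * Real.exp (Y i ω)) ℙ
      = (Real.exp 1) ^ 2 * ((Real.exp 1) ^ 2 - 1) * d := by
  classical
  -- a.e.-measurability of each variable
  have hmap0 : ∀ k : Fin d ⊕ Fin d, Measure.map (Sum.elim X Y k) ℙ = gaussianReal 0 1 := by
    rintro (i | i)
    · simpa using hX i
    · simpa using hY i
  have h0ae : ∀ k, AEMeasurable (Sum.elim X Y k) ℙ := by
    intro k
    by_contra h
    have h0 := hmap0 k
    rw [Measure.map_of_not_aemeasurable h] at h0
    have : (gaussianReal 0 1) Set.univ = 0 := by rw [← h0]; rfl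
    simp [measure_univ] at this
  -- measurable modifications
  set g : Fin d ⊕ Fin d → Ω → ℝ := fun k => (h0ae k).mk _ with hg_def
  have hg_meas : ∀ k, Measurable (g k) := fun k => (h0ae k).measurable_mk
  have hgae : ∀ k, Sum.elim X Y k =ᵐ[ℙ] g k := fun k => (h0ae k).ae_eq_mk
  have hindep' : iIndepFun g ℙ := my_iIndepFun_congr hindep hgae
  have hmap : ∀ k, Measure.map (g k) ℙ = gaussianReal 0 1 := fun k => by
    rw [← Measure.map_congr (hgae k)]; exact hmap0 k
  -- exponentials
  set E : Fin d ⊕ Fin d → Ω → ℝ := fun k ω => rexp (g k ω) with hE_def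
  have hE_meas : ∀ k, Measurable (E k) := fun k => Real.measurable_exp.comp (hg_meas k)
  have hEindep : iIndepFun E ℙ :=
    hindep'.comp (fun _ => rexp) (fun _ => Real.measurable_exp)
  -- first and second moments of each exponential
  have hint1 : ∀ k, Integrable (E k) ℙ := by
    intro k
    have := exp_comp_integrable (hg_meas k).aemeasurable (hmap k) 1
    simpa [hE_def, one_mul] using this
  have hm1 : ∀ k, ∫ ω, E k ω ∂ℙ = rexp (1 / 2) := by
    intro k
    have := exp_comp_integral (hg_meas k).aemeasurable (hmap k) 1
    simpa [hE_def, one_mul] using this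
  have hEsq : ∀ k, (fun ω => E k ω ^ 2) = fun ω => rexp (2 * g k ω) := by
    intro k
    ext ω
    rw [hE_def, ← Real.exp_nat_mul]
    norm_num
  have hint2 : ∀ k, Integrable (fun ω => E k ω ^ 2) ℙ := by
    intro k
    rw [hEsq k]
    exact exp_comp_integrable (hg_meas k).aemeasurable (hmap k) 2
  have hm2 : ∀ k, ∫ ω, E k ω ^ 2 ∂ℙ = rexp 2 := by
    intro k
    rw [hEsq k]
    have := exp_comp_integral (hg_meas k).aemeasurable (hmap k) 2
    norm_num at this
    convert this using 2
  -- the summands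
  set Z : Fin d → Ω → ℝ := fun i => E (Sum.inl i) * E (Sum.inr i) with hZ_def
  have hZ_meas : ∀ i, Measurable (Z i) := fun i => (hE_meas _).mul (hE_meas _)
  have hZindep : ∀ i, IndepFun (E (Sum.inl i)) (E (Sum.inr i)) ℙ :=
    fun i => hEindep.indepFun (by simp)
  have hZsq_int : ∀ i, Integrable (fun ω => Z i ω ^ 2) ℙ := by
    intro i
    have hind : IndepFun (fun ω => E (Sum.inl i) ω ^ 2) (fun ω => E (Sum.inr i) ω ^ 2) ℙ :=
      (hZindep i).comp (measurable_id.pow_const 2) (measurable_id.pow_const 2)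
    have := hind.integrable_mul (hint2 _) (hint2 _)
    have heq : (fun ω => Z i ω ^ 2)
        = (fun ω => E (Sum.inl i) ω ^ 2) * (fun ω => E (Sum.inr i) ω ^ 2) := by
      ext ω; simp [hZ_def]; ring
    rw [heq]; exact this
  have hZmem : ∀ i, MemLp (Z i) 2 ℙ := fun i =>
    (memLp_two_iff_integrable_sq (hZ_meas i).aestronglyMeasurable).2 (hZsq_int i)
  -- variance of each summand
  have hvar : ∀ i, variance (Z i) ℙ = rexp 1 ^ 2 * (rexp 1 ^ 2 - 1) := by
    intro i
    rw [variance_eq_sub (hZmem i)]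
    have h1 : ∫ ω, Z i ω ∂ℙ = rexp (1 / 2) * rexp (1 / 2) := by
      rw [hZ_def]
      rw [(hZindep i).integral_mul_eq_mul_integral (hE_meas _).aestronglyMeasurable
        (hE_meas _).aestronglyMeasurable, hm1, hm1]
    have h2 : ∫ ω, (Z i ω) ^ 2 ∂ℙ = rexp 2 * rexp 2 := by
      have hind : IndepFun (fun ω => E (Sum.inl i) ω ^ 2) (fun ω => E (Sum.inr i) ω ^ 2) ℙ :=
        (hZindep i).comp (measurable_id.pow_const 2) (measurable_id.pow_const 2)
      have heq : (fun ω => Z i ω ^ 2)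
          = (fun ω => E (Sum.inl i) ω ^ 2) * (fun ω => E (Sum.inr i) ω ^ 2) := by
        ext ω; simp [hZ_def]; ring
      calc ∫ ω, (Z i ω) ^ 2 ∂ℙ
          = ∫ ω, ((fun ω => E (Sum.inl i) ω ^ 2) * (fun ω => E (Sum.inr i) ω ^ 2)) ω ∂ℙ := by
            rw [heq]
        _ = rexp 2 * rexp 2 := by
            rw [hind.integral_mul_eq_mul_integral ((hE_meas _).pow_const 2).aestronglyMeasurable
              ((hE_meas _).pow_const 2).aestronglyMeasurable, hm2, hm2]
    have hZP : (fun ω => Z i ω) = Z i := rfl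
    rw [show (ℙ[(Z i) ^ 2] : ℝ) = ∫ ω, (Z i ω) ^ 2 ∂ℙ from rfl, h2,
      show (ℙ[Z i] : ℝ) = ∫ ω, Z i ω ∂ℙ from rfl, h1, ← Real.exp_add, ← Real.exp_add]
    rw [show rexp 1 ^ 2 = rexp 2 by rw [← Real.exp_nat_mul]; norm_num]
    norm_num
    rw [mul_sub, mul_one, ← Real.exp_add]
    norm_num
  -- pairwise independence of the summands
  have hpair : Set.Pairwise ↑(Finset.univ : Finset (Fin d))
      fun i j => IndepFun (Z i) (Z j) ℙ := by
    intro i _ j _ hij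
    exact hEindep.indepFun_mul_mul hE_meas (Sum.inl i) (Sum.inr i) (Sum.inl j) (Sum.inr j)
      (by simp [hij]) (by simp) (by simp) (by simp [hij])
  have hsum := IndepFun.variance_sum (μ := ℙ) (s := Finset.univ)
    (fun i _ => hZmem i) hpair
  -- identify the original function with ∑ Z i up to a.e. equality
  have hae_sum : (fun ω => ∑ i, Real.exp (X i ω) * Real.exp (Y i ω))
      =ᵐ[ℙ] (∑ i, Z i) := by
    have hall : ∀ᵐ ω ∂ℙ, ∀ k, Sum.elim X Y k ω = g k ω := ae_all_iff.2 hgae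
    filter_upwards [hall] with ω hω
    rw [Finset.sum_apply]
    refine Finset.sum_congr rfl fun i _ => ?_
    have h1 := hω (Sum.inl i)
    have h2 := hω (Sum.inr i)
    simp only [Sum.elim_inl, Sum.elim_inr] at h1 h2
    simp [hZ_def, hE_def, ← h1, ← h2]
  rw [my_variance_congr hae_sum, hsum]
  simp only [hvar, Finset.sum_const, Finset.card_univ, Fintype.card_fin, nsmul_eq_mul]
  ring
end

section
/- Let d be a positive integer and let x_1,…,x_d, y_1,…,y_d be mutually independent real random variables, each distributed as the Gaussian N(−√(2 ln d), 1) (mean −√(2 ln d), variance 1). Then the variance of z = ∑_{i=1}^d exp(x_i) · exp(y_i) equals e^{−4√(2 ln d)} · e²(e²−1) · d. -/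
open MeasureTheory ProbabilityTheory Real
open scoped ENNReal NNReal

lemma gauss_complete_square (m t x : ℝ) :
    Real.exp (t * x) * gaussianPDFReal m 1 x
      = Real.exp (t * m + t ^ 2 / 2) * gaussianPDFReal (m + t) 1 x := by
  simp only [gaussianPDFReal, NNReal.coe_one, mul_one]
  have h1 : Real.exp (t * x) * Real.exp (-(x - m) ^ 2 / 2)
      = Real.exp (t * m + t ^ 2 / 2) * Real.exp (-(x - (m + t)) ^ 2 / 2) := by
    rw [← Real.exp_add, ← Real.exp_add]
    congr 1
    ring
  calc Real.exp (t * x) * ((Real.sqrt (2 * π))⁻¹ * Real.exp (-(x - m) ^ 2 / 2))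
      = (Real.sqrt (2 * π))⁻¹ * (Real.exp (t * x) * Real.exp (-(x - m) ^ 2 / 2)) := by ring
    _ = (Real.sqrt (2 * π))⁻¹
        * (Real.exp (t * m + t ^ 2 / 2) * Real.exp (-(x - (m + t)) ^ 2 / 2)) := by rw [h1]
    _ = _ := by ring

lemma gaussianReal_one_eq (m : ℝ) :
    gaussianReal m 1 = (volume : Measure ℝ).withDensity
      (fun x => ((gaussianPDFReal m 1 x).toNNReal : ℝ≥0∞)) := by
  rw [gaussianReal_of_var_ne_zero _ one_ne_zero]
  rfl

lemma gauss_key_smul (m t : ℝ) :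
    (fun x => (gaussianPDFReal m 1 x).toNNReal • Real.exp (t * x))
      = fun x => Real.exp (t * m + t ^ 2 / 2) * gaussianPDFReal (m + t) 1 x := by
  funext x
  rw [NNReal.smul_def, Real.coe_toNNReal _ (gaussianPDFReal_nonneg m 1 x), smul_eq_mul,
    mul_comm, gauss_complete_square]

lemma integrable_exp_mul_gaussianReal (m t : ℝ) :
    Integrable (fun x => Real.exp (t * x)) (gaussianReal m 1) := by
  rw [gaussianReal_one_eq,
    integrable_withDensity_iff_integrable_smul (measurable_gaussianPDFReal m 1).real_toNNReal,
    gauss_key_smul]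
  exact (integrable_gaussianPDFReal _ _).const_mul _

lemma integral_exp_mul_gaussianReal (m t : ℝ) :
    ∫ x, Real.exp (t * x) ∂(gaussianReal m 1) = Real.exp (t * m + t ^ 2 / 2) := by
  rw [gaussianReal_one_eq,
    integral_withDensity_eq_integral_smul (measurable_gaussianPDFReal m 1).real_toNNReal,
    gauss_key_smul, integral_const_mul, integral_gaussianPDFReal_eq_one _ one_ne_zero, mul_one]

lemma rv_exp_moment {Ω : Type*} [MeasureSpace Ω] {W : Ω → ℝ} {m : ℝ}
    (hW : Measure.map W ℙ = gaussianReal m 1) (hWm : AEMeasurable W ℙ) (t : ℝ) :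
    ∫ ω, Real.exp (t * W ω) ∂ℙ = Real.exp (t * m + t ^ 2 / 2) := by
  rw [← integral_map hWm
      (f := fun x => Real.exp (t * x))
      (Real.measurable_exp.comp (measurable_const_mul t)).aestronglyMeasurable,
    hW, integral_exp_mul_gaussianReal]

lemma rv_exp_integrable {Ω : Type*} [MeasureSpace Ω] {W : Ω → ℝ} {m : ℝ}
    (hW : Measure.map W ℙ = gaussianReal m 1) (hWm : AEMeasurable W ℙ) (t : ℝ) :
    Integrable (fun ω => Real.exp (t * W ω)) ℙ := by
  have h := integrable_exp_mul_gaussianReal m t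
  rw [← hW] at h
  exact (integrable_map_measure
    (Real.measurable_exp.comp (measurable_const_mul t)).aestronglyMeasurable hWm).mp h

lemma variance_congr_ae {Ω : Type*} {m0 : MeasurableSpace Ω} {μ : Measure Ω} {X Y : Ω → ℝ}
    (h : X =ᵐ[μ] Y) : variance X μ = variance Y μ := by
  have hi : μ[X] = μ[Y] := integral_congr_ae h
  unfold ProbabilityTheory.variance ProbabilityTheory.evariance
  rw [hi]
  congr 1
  apply lintegral_congr_ae
  filter_upwards [h] with ω hω
  rw [hω]

/-- Appendix theorem: for `2d` mutually independent Gaussian random variables with mean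
`−√(2 ln d)` and variance `1`, the variance of `z = ∑ i, exp(xᵢ) * exp(yᵢ)` equals
`e^(−4√(2 ln d)) · e²(e² − 1) · d`. -/
theorem variance_sum_exp_mul_of_iid_shifted_gaussian
    {Ω : Type*} [MeasureSpace Ω] [IsProbabilityMeasure (ℙ : Measure Ω)]
    (d : ℕ) (hd : 0 < d) (X Y : Fin d → Ω → ℝ)
    (hindep : iIndepFun (Sum.elim X Y) ℙ)
    (hX : ∀ i, Measure.map (X i) ℙ = gaussianReal (-Real.sqrt (2 * Real.log d)) 1)
    (hY : ∀ i, Measure.map (Y i) ℙ = gaussianReal (-Real.sqrt (2 * Real.log d)) 1) :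
    variance (fun ω => ∑ i, Real.exp (X i ω) * Real.exp (Y i ω)) ℙ
      = Real.exp (-(4 * Real.sqrt (2 * Real.log d)))
          * ((Real.exp 1) ^ 2 * ((Real.exp 1) ^ 2 - 1)) * d := by
  classical
  set m : ℝ := -Real.sqrt (2 * Real.log d) with hm
  set f : Fin d ⊕ Fin d → Ω → ℝ := Sum.elim X Y with hf
  have hmap : ∀ k, Measure.map (f k) ℙ = gaussianReal m 1 := by
    rintro (i | i)
    · exact hX i
    · exact hY i
  have haem : ∀ k, AEMeasurable (f k) ℙ := by
    intro k
    refine aemeasurable_of_map_neZero ?_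
    rw [hmap k]
    infer_instance
  set f' : Fin d ⊕ Fin d → Ω → ℝ := fun k => (haem k).mk _ with hf'
  have hfeq : ∀ k, f k =ᵐ[ℙ] f' k := fun k => (haem k).ae_eq_mk
  have hf'meas : ∀ k, Measurable (f' k) := fun k => (haem k).measurable_mk
  have hmap' : ∀ k, Measure.map (f' k) ℙ = gaussianReal m 1 := fun k => by
    rw [← Measure.map_congr (hfeq k), hmap k]
  have hindep' : iIndepFun f' ℙ := by
    rw [iIndepFun_iff_measure_inter_preimage_eq_mul] at hindep ⊢
    intro S sets hsets
    have hae : ∀ᵐ ω ∂ℙ, ∀ i, f i ω = f' i ω := by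
      rw [ae_all_iff]; exact hfeq
    have h1 : (⋂ i ∈ S, f' i ⁻¹' sets i) =ᵐ[ℙ] (⋂ i ∈ S, f i ⁻¹' sets i) := by
      rw [Filter.eventuallyEq_set]
      filter_upwards [hae] with ω hω
      simp only [Set.mem_iInter, Set.mem_preimage]
      exact forall₂_congr fun i hi => by rw [hω i]
    rw [measure_congr h1, hindep S hsets]
    refine Finset.prod_congr rfl fun i hi => ?_
    refine measure_congr ?_
    rw [Filter.eventuallyEq_set]
    filter_upwards [hfeq i] with ω hω
    simp only [Set.mem_preimage, hω]
  set g : Fin d ⊕ Fin d → Ω → ℝ := fun k => Real.exp ∘ f' k with hg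
  have hexp : iIndepFun g ℙ :=
    hindep'.comp (fun _ => Real.exp) (fun _ => Real.measurable_exp)
  have hgmeas : ∀ k, Measurable (g k) := fun k => Real.measurable_exp.comp (hf'meas k)
  set Z : Fin d → Ω → ℝ := fun i => g (Sum.inl i) * g (Sum.inr i) with hZ
  -- moments
  have hint : ∀ k t, Integrable (fun ω => Real.exp (t * f' k ω)) ℙ := fun k t =>
    rv_exp_integrable (hmap' k) (hf'meas k).aemeasurable t
  have hval : ∀ k t, ∫ ω, Real.exp (t * f' k ω) ∂ℙ = Real.exp (t * m + t ^ 2 / 2) := fun k t =>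
    rv_exp_moment (hmap' k) (hf'meas k).aemeasurable t
  have hint1 : ∀ k, Integrable (g k) ℙ := fun k => by
    have h := hint k 1
    simpa [hg, Function.comp_def] using h
  have hval1 : ∀ k, ∫ ω, g k ω ∂ℙ = Real.exp (m + 1 / 2) := fun k => by
    have h := hval k 1
    norm_num at h
    simpa [hg, Function.comp] using h
  have hval2 : ∀ k, ∫ ω, Real.exp (2 * f' k ω) ∂ℙ = Real.exp (2 * m + 2) := fun k => by
    have h := hval k 2
    norm_num at h
    exact h
  -- independence of the exp(2·) pair at each index
  have hZii : ∀ i : Fin d, IndepFun (fun ω => Real.exp (2 * f' (Sum.inl i) ω))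
      (fun ω => Real.exp (2 * f' (Sum.inr i) ω)) ℙ := fun i => by
    have h := (hindep'.indepFun
        (show (Sum.inl i : Fin d ⊕ Fin d) ≠ Sum.inr i by simp)).comp
      (Real.measurable_exp.comp (measurable_const_mul 2))
      (Real.measurable_exp.comp (measurable_const_mul 2))
    simpa [Function.comp_def] using h
  have hgind : ∀ i : Fin d, IndepFun (g (Sum.inl i)) (g (Sum.inr i)) ℙ := fun i =>
    hexp.indepFun (show (Sum.inl i : Fin d ⊕ Fin d) ≠ Sum.inr i by simp)
  have hZint : ∀ i, Integrable (Z i) ℙ := fun i =>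
    (hgind i).integrable_mul (hint1 _) (hint1 _)
  have hEZ : ∀ i, ∫ ω, Z i ω ∂ℙ = Real.exp (m + 1 / 2) * Real.exp (m + 1 / 2) := fun i => by
    have h := (hgind i).integral_mul_eq_mul_integral (hint1 _).aestronglyMeasurable (hint1 _).aestronglyMeasurable
    rw [hval1, hval1] at h
    exact h
  have hZsq : ∀ i, (fun ω => Z i ω ^ 2)
      = fun ω => Real.exp (2 * f' (Sum.inl i) ω) * Real.exp (2 * f' (Sum.inr i) ω) := fun i => by
    funext ω
    simp only [hZ, hg, Pi.mul_apply, Function.comp_apply]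
    rw [two_mul, two_mul, Real.exp_add, Real.exp_add]
    ring
  have hZsqint : ∀ i, Integrable (fun ω => Z i ω ^ 2) ℙ := fun i => by
    rw [hZsq i]
    exact (hZii i).integrable_mul (hint _ 2) (hint _ 2)
  have hmem : ∀ i, MemLp (Z i) 2 ℙ := fun i =>
    (memLp_two_iff_integrable_sq
      ((hgmeas _).mul (hgmeas _)).aestronglyMeasurable).mpr (hZsqint i)
  have hEZsq : ∀ i, ∫ ω, Z i ω ^ 2 ∂ℙ = Real.exp (2 * m + 2) * Real.exp (2 * m + 2) := fun i => by
    rw [hZsq i]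
    have h := (hZii i).integral_fun_mul_eq_mul_integral (hint _ 2).aestronglyMeasurable (hint _ 2).aestronglyMeasurable
    rw [hval2, hval2] at h
    exact h
  have hvar : ∀ i, variance (Z i) ℙ = Real.exp (4 * m + 4) - Real.exp (4 * m + 2) := fun i => by
    rw [variance_eq_sub (hmem i)]
    have e1 : ℙ[Z i ^ 2] = Real.exp (2 * m + 2) * Real.exp (2 * m + 2) := by
      rw [← hEZsq i]
      exact integral_congr_ae (Filter.Eventually.of_forall fun ω => by simp [Pi.pow_apply])
    have e2 : ℙ[Z i] = Real.exp (m + 1 / 2) * Real.exp (m + 1 / 2) := hEZ i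
    rw [e1, e2]
    have h3 : Real.exp (2 * m + 2) * Real.exp (2 * m + 2) = Real.exp (4 * m + 4) := by
      rw [← Real.exp_add]; congr 1; ring
    have h4 : (Real.exp (m + 1 / 2) * Real.exp (m + 1 / 2)) ^ 2 = Real.exp (4 * m + 2) := by
      rw [← Real.exp_add, sq, ← Real.exp_add]; congr 1; ring
    rw [h3, h4]
  have hZpair : ∀ i j : Fin d, i ≠ j → IndepFun (Z i) (Z j) ℙ := fun i j hij =>
    hexp.indepFun_mul_mul hgmeas (Sum.inl i) (Sum.inr i) (Sum.inl j) (Sum.inr j)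
      (by simp [hij]) (by simp) (by simp) (by simp [hij])
  have hsum : variance (∑ i, Z i) ℙ = ∑ i : Fin d, variance (Z i) ℙ :=
    IndepFun.variance_sum (fun i _ => hmem i)
      (fun i _ j _ hij => hZpair i j hij)
  have hae2 : (fun ω => ∑ i, Real.exp (X i ω) * Real.exp (Y i ω)) =ᵐ[ℙ] (∑ i, Z i) := by
    have hall : ∀ᵐ ω ∂ℙ, ∀ k, f k ω = f' k ω := by
      rw [ae_all_iff]; exact hfeq
    filter_upwards [hall] with ω hω
    simp only [Finset.sum_apply, Pi.mul_apply, hZ, hg, Function.comp_apply]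
    refine Finset.sum_congr rfl fun i _ => ?_
    rw [← hω (Sum.inl i), ← hω (Sum.inr i)]
    rfl
  rw [variance_congr_ae hae2, hsum]
  simp only [hvar, Finset.sum_const, Finset.card_univ, Fintype.card_fin, nsmul_eq_mul]
  have h4m : (4 : ℝ) * m = -(4 * Real.sqrt (2 * Real.log d)) := by rw [hm]; ring
  have he2 : Real.exp 1 ^ 2 = Real.exp 2 := by
    rw [sq, ← Real.exp_add]; norm_num
  have he4 : Real.exp (4 * m + 4) = Real.exp (4 * m) * (Real.exp 2 * Real.exp 2) := by
    rw [← Real.exp_add, ← Real.exp_add]; congr 1; ring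
  have he42 : Real.exp (4 * m + 2) = Real.exp (4 * m) * Real.exp 2 := by
    rw [← Real.exp_add]
  rw [← h4m, he2, he4, he42]
  ring
end
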